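/- arXiv:1402.3532 — 3 statements merged into one kernel-verified Lean document; each statement's English description precedes it below -/
import Mathlib

section
/- Let K be a field and A = {u_1,...,u_n} a set of monomials of the same degree in K[t_1,...,t_d]. Suppose that for each pair 1 ≤ i < j ≤ n there exists a monomial order ≺ on K[x_1,...,x_n] such that every binomial g in the reduced Gröbner basis of the toric ideal I_A with respect to ≺ satisfies: (i) if x_i divides in_≺(g) and x_j does not divide in_≺(g), then g = x_i x_k − x_j x_ℓ for some 1 ≤ k, ℓ ≤ n; and (ii) if x_j divides in_≺(g) and x_i does not divide in_≺(g), then g = x_j x_ℓ − x_i x_k for some 1 ≤ k, ℓ ≤ n. Then the toric ring K[A] is strongly Koszul. -/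
/-!
Common definitions: toric ideals/rings of monomial families, strong Koszulness
with respect to a system of algebra generators, initial ideals with respect to
a relation on exponent vectors, (reduced) Gröbner bases, the (graded) reverse
lexicographic order induced by an ordering of the variables, minimal monomial
generators, and compressedness.
-/

open MvPolynomial

noncomputable section

/-- The total degree of an exponent vector. -/
def expDeg {n : ℕ} (d : Fin n →₀ ℕ) : ℕ := d.sum fun _ e => e

/-- The toric ideal `I_A ⊆ K[x_1,…,x_n]` of the family of monomials
`u i = t^(a i)` in `K[t_1,…,t_d]`: the kernel of `π : x_i ↦ u_i`. -/
def toricIdeal (K : Type) [Field K] {n d : ℕ} (a : Fin n → (Fin d →₀ ℕ)) :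
    Ideal (MvPolynomial (Fin n) K) :=
  RingHom.ker (MvPolynomial.aeval
    (fun i => (MvPolynomial.monomial (a i) (1 : K) : MvPolynomial (Fin d) K)) :
      MvPolynomial (Fin n) K →ₐ[K] MvPolynomial (Fin d) K).toRingHom

/-- The toric ring `K[A] ⊆ K[t_1,…,t_d]` generated by the monomials `t^(a i)`. -/
def toricRing (K : Type) [Field K] {n d : ℕ} (a : Fin n → (Fin d →₀ ℕ)) :
    Subalgebra K (MvPolynomial (Fin d) K) :=
  Algebra.adjoin K (Set.range fun i => (MvPolynomial.monomial (a i) (1 : K)))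

/-- The generator `u_i = t^(a i)`, as an element of the toric ring `K[A]`. -/
def toricGen (K : Type) [Field K] {n d : ℕ} (a : Fin n → (Fin d →₀ ℕ)) (i : Fin n) :
    toricRing K a :=
  ⟨MvPolynomial.monomial (a i) (1 : K), Algebra.subset_adjoin (Set.mem_range_self i)⟩

/-- A commutative ring `R` is strongly Koszul with respect to the system of
generators `u_1,…,u_n` (of its maximal graded ideal) if for every chain
`i_1 < i_2 < ⋯ < i_r` of indices and every `j = 1,…,r` the colon ideal
`(u_{i_1},…,u_{i_{j-1}}) : u_{i_j}` is generated by a subset of `{u_1,…,u_n}`. -/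
def StronglyKoszulWith {R : Type} [CommRing R] {n : ℕ} (u : Fin n → R) : Prop :=
  ∀ (r : ℕ) (c : Fin r → Fin n), StrictMono c → ∀ j : Fin r,
    ∃ S : Set R, S ⊆ Set.range u ∧
      Submodule.colon (Ideal.span ((fun k => u (c k)) '' {k : Fin r | k < j}))
        (Ideal.span {u (c j)}) = Ideal.span S

/-- The toric ring `K[A]` is strongly Koszul (with respect to its monomial
generators `u_1,…,u_n`, which form its distinguished minimal system of
generators of the same degree). -/
def ToricStronglyKoszul (K : Type) [Field K] {n d : ℕ} (a : Fin n → (Fin d →₀ ℕ)) : Prop :=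
  StronglyKoszulWith (toricGen K a)

/-- `dd` is the exponent vector of the initial (leading) monomial of `f` with
respect to the strict comparison `lt` on exponent vectors. -/
def IsInitialExp {K : Type} [Field K] {n : ℕ}
    (lt : (Fin n →₀ ℕ) → (Fin n →₀ ℕ) → Prop)
    (f : MvPolynomial (Fin n) K) (dd : Fin n →₀ ℕ) : Prop :=
  dd ∈ f.support ∧ ∀ d' ∈ f.support, d' ≠ dd → lt d' dd

/-- The initial ideal `in_lt(I)`: the monomial ideal generated by the initial
monomials of the nonzero elements of `I`. -/
def initialIdeal {K : Type} [Field K] {n : ℕ}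
    (lt : (Fin n →₀ ℕ) → (Fin n →₀ ℕ) → Prop)
    (I : Ideal (MvPolynomial (Fin n) K)) : Ideal (MvPolynomial (Fin n) K) :=
  Ideal.span {m | ∃ f ∈ I, ∃ dd, IsInitialExp lt f dd ∧
    m = MvPolynomial.monomial dd (1 : K)}

/-- `G` is the reduced Gröbner basis of `I` with respect to the strict
comparison `lt` (coming from a monomial order): the elements of `G` lie in `I`,
are monic, their initial monomials generate the initial ideal of `I`,
and no monomial occurring in an element of `G` is divisible by the initial
monomial of another element of `G`. -/
def IsReducedGB {K : Type} [Field K] {n : ℕ}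
    (lt : (Fin n →₀ ℕ) → (Fin n →₀ ℕ) → Prop)
    (I : Ideal (MvPolynomial (Fin n) K)) (G : Finset (MvPolynomial (Fin n) K)) : Prop :=
  (∀ g ∈ G, g ∈ I) ∧
  (∀ g ∈ G, ∃ dd, IsInitialExp lt g dd ∧ MvPolynomial.coeff dd g = 1) ∧
  (initialIdeal lt I =
    Ideal.span {m | ∃ g ∈ G, ∃ dd, IsInitialExp lt g dd ∧
      m = MvPolynomial.monomial dd (1 : K)}) ∧
  (∀ g ∈ G, ∀ g' ∈ G, g' ≠ g → ∀ d' ∈ g.support, ∀ dd, IsInitialExp lt g' dd → ¬ dd ≤ d')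

/-- The strict comparison of the (graded) reverse lexicographic order induced by
the ordering `x_{ord 0} < x_{ord 1} < ⋯ < x_{ord (n-1)}` of the variables:
`x < y` iff `deg x < deg y`, or the degrees agree and `x` has a strictly larger
exponent than `y` at the smallest variable where they differ. -/
def rlexLT {n : ℕ} (ord : Fin n ≃ Fin n) (x y : Fin n →₀ ℕ) : Prop :=
  expDeg x < expDeg y ∨ (expDeg x = expDeg y ∧
    ∃ p : Fin n, y (ord p) < x (ord p) ∧ ∀ q : Fin n, q < p → x (ord q) = y (ord q))

/-- `dd` is (the exponent vector of) a member of `G(I)`, the minimal system of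
monomial generators of the monomial ideal `I`: the monomial `x^dd` lies in `I`
but no proper divisor of it does. -/
def IsMinGen {K : Type} [Field K] {n : ℕ} (I : Ideal (MvPolynomial (Fin n) K))
    (dd : Fin n →₀ ℕ) : Prop :=
  MvPolynomial.monomial dd (1 : K) ∈ I ∧
  ∀ d' : Fin n →₀ ℕ, d' ≤ dd → d' ≠ dd → MvPolynomial.monomial d' (1 : K) ∉ I

/-- The toric ring `K[A]` is compressed: the initial ideal of `I_A` is radical
for every reverse lexicographic order. -/
def ToricCompressed (K : Type) [Field K] {n d : ℕ} (a : Fin n → (Fin d →₀ ℕ)) : Prop :=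
  ∀ ord : Fin n ≃ Fin n,
    (initialIdeal (rlexLT ord) (toricIdeal K a)).radical
      = initialIdeal (rlexLT ord) (toricIdeal K a)

/-- The strict comparison on exponent vectors associated to a monomial order. -/
def MonomialOrder.ltRel {σ : Type*} (m : MonomialOrder σ) :
    (σ →₀ ℕ) → (σ →₀ ℕ) → Prop :=
  fun a b => m.toSyn a < m.toSyn b

/-- A quadratic binomial: a difference of two (monic) monomials of degree 2. -/
def IsQuadBinomial {K : Type} [Field K] {n : ℕ} (g : MvPolynomial (Fin n) K) : Prop :=
  ∃ b c : Fin n →₀ ℕ, expDeg b = 2 ∧ expDeg c = 2 ∧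
    g = MvPolynomial.monomial b (1 : K) - MvPolynomial.monomial c (1 : K)

end

open MvPolynomial

/-!
If `u_j w ∈ (u_i)` for a monomial `w = t^{Ac}` of `K[A]`, the binomial `x_j x^c - x_i x^e` lies in
`I_A`, so its initial monomial is divisible by the initial monomial of some `g` in the Gröbner basis
for the pair `(i, j)`. Either that divisibility already exhibits a factor `u_l` of `w` with
`u_j u_l = u_i u_k` (by (i)/(ii), or because the initial monomial contains the other variable), or
it lets us replace `x^c` or `x^e` by a smaller monomial with the same image, and we conclude by
well-founded induction along the monomial order. Thus `(u_i) : u_j` is generated on monomials by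
such `u_l`; since ideals of `K[A]` generated by some of the `u_i` are monomial ideals, every colon
ideal in the definition of strong Koszulness is generated by the `u_l` it contains.
-/
open Finsupp (linearCombination linearCombination_single single single_eq_of_ne single_le_iff)

noncomputable section

section Toric

variable (K : Type) [Field K] {n d : ℕ} (a : Fin n → (Fin d →₀ ℕ))

abbrev toricMap : MvPolynomial (Fin n) K →ₐ[K] MvPolynomial (Fin d) K :=
  aeval fun i => monomial (a i) 1

variable {K a}

lemma mem_toricIdeal {f : MvPolynomial (Fin n) K} : f ∈ toricIdeal K a ↔ toricMap K a f = 0 :=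
  RingHom.mem_ker

lemma toricMap_monomial (c : Fin n →₀ ℕ) (r : K) :
    toricMap K a (monomial c r) = monomial (linearCombination ℕ a c) r := by
  rw [aeval_monomial, algebraMap_eq, Finsupp.linearCombination_apply, monomial_finsupp_sum_index]
  simp only [monomial_pow, one_pow]

lemma coeff_toricMap (p : MvPolynomial (Fin n) K) (b : Fin d →₀ ℕ) :
    coeff b (toricMap K a p) =
      ∑ γ ∈ p.support with linearCombination ℕ a γ = b, coeff γ p := by
  conv_lhs => rw [p.as_sum]
  rw [map_sum, coeff_sum, Finset.sum_filter]
  refine Finset.sum_congr rfl fun γ _ => ?_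
  rw [toricMap_monomial, coeff_monomial]

lemma exists_mem_support_of_mem_support_toricMap {p : MvPolynomial (Fin n) K}
    {b : Fin d →₀ ℕ} (hb : b ∈ (toricMap K a p).support) :
    ∃ γ ∈ p.support, linearCombination ℕ a γ = b := by
  rw [mem_support_iff, coeff_toricMap] at hb
  obtain ⟨γ, hγ, -⟩ := Finset.exists_ne_zero_of_sum_ne_zero hb
  exact ⟨γ, Finset.mem_filter.mp hγ⟩

lemma exists_ne_of_mem_toricIdeal {f : MvPolynomial (Fin n) K} (hf : f ∈ toricIdeal K a)
    {β : Fin n →₀ ℕ} (hβ : β ∈ f.support) :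
    ∃ β' ∈ f.support, β' ≠ β ∧ linearCombination ℕ a β' = linearCombination ℕ a β := by
  by_contra! hne
  have hcoeff := congrArg (coeff (linearCombination ℕ a β)) (mem_toricIdeal.mp hf)
  rw [coeff_toricMap, coeff_zero, Finset.sum_eq_single_of_mem β (by simpa using hβ)] at hcoeff
  · exact mem_support_iff.mp hβ hcoeff
  · intro β' hβ' hβ'β
    rw [Finset.mem_filter] at hβ'
    exact absurd hβ'.2 (hne β' hβ'.1 hβ'β)

lemma add_eq_add_of_mem_toricIdeal {i k j l : Fin n}
    (h : X i * X k - X j * X l ∈ toricIdeal K a) : a i + a k = a j + a l := by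
  rw [mem_toricIdeal, map_sub, sub_eq_zero] at h
  simpa [monomial_mul] using h

lemma exists_toSyn_lt_of_isInitialExp_le (m : MonomialOrder (Fin n)) {f : MvPolynomial (Fin n) K}
    (hf : f ∈ toricIdeal K a) {β c : Fin n →₀ ℕ} (hβ : IsInitialExp m.ltRel f β) (hβc : β ≤ c) :
    ∃ γ, m.toSyn γ < m.toSyn c ∧ linearCombination ℕ a γ = linearCombination ℕ a c := by
  obtain ⟨β', hβ', hne, hβ'β⟩ := exists_ne_of_mem_toricIdeal hf hβ.1
  have hlt : m.toSyn β' < m.toSyn β := hβ.2 β' hβ' hne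
  refine ⟨c - β + β', ?_, ?_⟩
  · calc m.toSyn (c - β + β') = m.toSyn (c - β) + m.toSyn β' := map_add _ _ _
      _ < m.toSyn (c - β) + m.toSyn β := add_lt_add_right hlt _
      _ = m.toSyn c := by rw [← map_add, tsub_add_cancel_of_le hβc]
  · rw [map_add, hβ'β, ← map_add, tsub_add_cancel_of_le hβc]

end Toric

section GroebnerBasis

variable {K : Type} [Field K] {n : ℕ}

lemma isInitialExp_monomial_sub_monomial {m : MonomialOrder (Fin n)} {α α' : Fin n →₀ ℕ}
    (h : m.toSyn α' < m.toSyn α) :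
    IsInitialExp m.ltRel (monomial α (1 : K) - monomial α' 1) α := by
  classical
  have hne : α' ≠ α := fun h' => h.ne (congrArg m.toSyn h')
  refine ⟨by simp [hne], fun δ hδ hδα => ?_⟩
  have := support_sub _ _ _ hδ
  simp only [Finset.mem_union, support_monomial, one_ne_zero, if_false,
    Finset.mem_singleton] at this
  rcases this with rfl | rfl
  · exact absurd rfl hδα
  · exact h

def IsGroebnerBasis (lt : (Fin n →₀ ℕ) → (Fin n →₀ ℕ) → Prop)
    (I : Ideal (MvPolynomial (Fin n) K)) (G : Finset (MvPolynomial (Fin n) K)) : Prop :=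
  (∀ g ∈ G, g ∈ I) ∧
  initialIdeal lt I =
    Ideal.span {m | ∃ g ∈ G, ∃ dd, IsInitialExp lt g dd ∧ m = monomial dd (1 : K)}

variable {lt : (Fin n →₀ ℕ) → (Fin n →₀ ℕ) → Prop} {I : Ideal (MvPolynomial (Fin n) K)}
  {G : Finset (MvPolynomial (Fin n) K)}

lemma IsReducedGB.isGroebnerBasis (h : IsReducedGB lt I G) : IsGroebnerBasis lt I G :=
  ⟨h.1, h.2.2.1⟩

lemma IsGroebnerBasis.exists_isInitialExp_le (hG : IsGroebnerBasis lt I G)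
    {f : MvPolynomial (Fin n) K} (hf : f ∈ I) {dd : Fin n →₀ ℕ} (hdd : IsInitialExp lt f dd) :
    ∃ g ∈ G, ∃ β, IsInitialExp lt g β ∧ β ≤ dd := by
  have hmem : monomial dd (1 : K) ∈ initialIdeal lt I := Ideal.subset_span ⟨f, hf, dd, hdd, rfl⟩
  have hset : {m | ∃ g ∈ G, ∃ dd, IsInitialExp lt g dd ∧ m = monomial dd (1 : K)} =
      (fun β => monomial β 1) '' {β | ∃ g ∈ G, IsInitialExp lt g β} := by
    ext
    constructor
    · rintro ⟨g, hg, β, hβ, rfl⟩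
      exact ⟨β, ⟨g, hg, hβ⟩, rfl⟩
    · rintro ⟨β, ⟨g, hg, hβ⟩, rfl⟩
      exact ⟨g, hg, β, hβ, rfl⟩
  rw [hG.2, hset, mem_ideal_span_monomial_image] at hmem
  obtain ⟨β, ⟨g, hg, hβ⟩, hle⟩ := hmem dd (by simp)
  exact ⟨g, hg, β, hβ, hle⟩

end GroebnerBasis

section QuadraticColon

variable {n d : ℕ} (a : Fin n → (Fin d →₀ ℕ))

/-- `t^b` is divisible, within the monoid `ℕA`, by some `u_l` with `u_j u_l = u_i u_k`. -/
def IsQuadraticColonMultiple (i j : Fin n) (b : Fin d →₀ ℕ) : Prop :=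
  ∃ l k : Fin n, ∃ c : Fin n →₀ ℕ, b = a l + linearCombination ℕ a c ∧ a j + a l = a i + a k

/-- On monomials, the colon ideal `(u_i) : u_j` of `K[A]` is generated by those `u_l` with
`u_j u_l = u_i u_k` for some `k`. -/
def HasQuadraticColon (i j : Fin n) : Prop :=
  ∀ c e : Fin n →₀ ℕ, a j + linearCombination ℕ a c = a i + linearCombination ℕ a e →
    IsQuadraticColonMultiple a i j (linearCombination ℕ a c)

variable {a}

lemma isQuadraticColonMultiple_of_single_le {i j l k : Fin n} {c : Fin n →₀ ℕ}
    (hc : single l 1 ≤ c) (hl : a j + a l = a i + a k) :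
    IsQuadraticColonMultiple a i j (linearCombination ℕ a c) := by
  refine ⟨l, k, c - single l 1, ?_, hl⟩
  conv_lhs => rw [← add_tsub_cancel_of_le hc]
  rw [map_add, linearCombination_single, one_smul]

lemma IsQuadraticColonMultiple.of_add_eq {i j : Fin n} {b b' : Fin d →₀ ℕ}
    (hb' : IsQuadraticColonMultiple a j i b') (h : a j + b = a i + b') :
    IsQuadraticColonMultiple a i j b := by
  obtain ⟨l, k, c, rfl, hl⟩ := hb'
  refine ⟨k, l, c, add_left_cancel (a := a j) ?_, hl.symm⟩
  rw [h, ← add_assoc, ← add_assoc, hl]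

end QuadraticColon

section Exchange

variable {K : Type} [Field K] {n d : ℕ} {a : Fin n → (Fin d →₀ ℕ)}

/-- Condition (i) of the theorem for the pair `(i, j)`; condition (ii) is the same for `(j, i)`. -/
def IsQuadraticExchange (lt : (Fin n →₀ ℕ) → (Fin n →₀ ℕ) → Prop)
    (G : Finset (MvPolynomial (Fin n) K)) (i j : Fin n) : Prop :=
  ∀ g ∈ G, ∀ β, IsInitialExp lt g β → β i ≠ 0 → β j = 0 → ∃ k l, g = X i * X k - X j * X l

lemma single_le_of_le_single_add {i j : Fin n} (hij : i ≠ j) {β e : Fin n →₀ ℕ}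
    (hβ : β ≤ single i 1 + e) (hβj : β j ≠ 0) : single j 1 ≤ e := by
  have := hβ j
  rw [Finsupp.add_apply, single_eq_of_ne hij.symm, zero_add] at this
  exact single_le_iff.mpr (by omega)

lemma le_of_le_single_add {i : Fin n} {β e : Fin n →₀ ℕ} (hβ : β ≤ single i 1 + e)
    (hβi : β i = 0) : β ≤ e := by
  intro q
  have := hβ q
  rw [Finsupp.add_apply] at this
  by_cases hq : q = i
  · subst hq; omega
  · rw [single_eq_of_ne hq, zero_add] at this; exact this

lemma eq_single_add_single_of_isInitialExp {lt : (Fin n →₀ ℕ) → (Fin n →₀ ℕ) → Prop}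
    {i k j l : Fin n} {β : Fin n →₀ ℕ}
    (hβ : IsInitialExp lt (X i * X k - X j * X l : MvPolynomial (Fin n) K) β) (hβj : β j = 0) :
    β = single i 1 + single k 1 := by
  classical
  have := support_sub _ _ _ hβ.1
  simp only [X, monomial_mul, one_mul, Finset.mem_union, support_monomial, one_ne_zero,
    if_false, Finset.mem_singleton] at this
  rcases this with rfl | rfl
  · rfl
  · simp at hβj

variable {m : MonomialOrder (Fin n)} {G : Finset (MvPolynomial (Fin n) K)} {i j : Fin n}

lemma isQuadraticColonMultiple_or_exists_toSyn_lt (hij : i ≠ j)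
    (hG : IsGroebnerBasis m.ltRel (toricIdeal K a) G) (hq : IsQuadraticExchange m.ltRel G i j)
    {c e : Fin n →₀ ℕ} (h : a j + linearCombination ℕ a c = a i + linearCombination ℕ a e)
    (hlt : m.toSyn (single j 1 + c) < m.toSyn (single i 1 + e)) :
    IsQuadraticColonMultiple a j i (linearCombination ℕ a e) ∨
      ∃ γ, m.toSyn γ < m.toSyn e ∧ linearCombination ℕ a γ = linearCombination ℕ a e := by
  have hf : monomial (single i 1 + e) (1 : K) - monomial (single j 1 + c) 1 ∈ toricIdeal K a := by
    rw [mem_toricIdeal, map_sub, toricMap_monomial, toricMap_monomial, map_add, map_add,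
      linearCombination_single, linearCombination_single, one_smul, one_smul, h, sub_self]
  obtain ⟨g, hg, β, hβ, hle⟩ :=
    hG.exists_isInitialExp_le hf (isInitialExp_monomial_sub_monomial hlt)
  by_cases hβj : β j = 0
  · by_cases hβi : β i = 0
    · exact Or.inr (exists_toSyn_lt_of_isInitialExp_le m (hG.1 g hg) hβ
        (le_of_le_single_add hle hβi))
    · obtain ⟨k, l, rfl⟩ := hq g hg β hβ hβi hβj
      rw [eq_single_add_single_of_isInitialExp hβ hβj] at hle
      exact Or.inl (isQuadraticColonMultiple_of_single_le (le_of_add_le_add_left hle)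
        (add_eq_add_of_mem_toricIdeal (hG.1 _ hg)))
  · exact Or.inl (isQuadraticColonMultiple_of_single_le (single_le_of_le_single_add hij hle hβj)
      (add_comm _ _))

theorem hasQuadraticColon_of_isGroebnerBasis (hij : i ≠ j)
    (hG : IsGroebnerBasis m.ltRel (toricIdeal K a) G) (hi : IsQuadraticExchange m.ltRel G i j)
    (hj : IsQuadraticExchange m.ltRel G j i) : HasQuadraticColon a i j := by
  intro c e h
  obtain ⟨s, hs⟩ : ∃ s, m.toSyn (c + e) = s := ⟨_, rfl⟩
  induction s using WellFoundedLT.induction generalizing c e with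
  | ind s ih =>
  rcases lt_trichotomy (m.toSyn (single j 1 + c)) (m.toSyn (single i 1 + e)) with hlt | heq | hgt
  · rcases isQuadraticColonMultiple_or_exists_toSyn_lt hij hG hi h hlt with hq | ⟨γ, hγ, hγe⟩
    · exact hq.of_add_eq h
    · refine ih _ ?_ c γ (hγe ▸ h) rfl
      rw [← hs, map_add, map_add]
      exact add_lt_add_right hγ _
  · have hc : single i 1 ≤ c :=
      single_le_of_le_single_add hij.symm (m.toSyn.injective heq).ge (by simp)
    exact isQuadraticColonMultiple_of_single_le hc (add_comm _ _)
  · rcases isQuadraticColonMultiple_or_exists_toSyn_lt hij.symm hG hj h.symm hgt with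
      hq | ⟨γ, hγ, hγc⟩
    · exact hq
    · rw [← hγc]
      refine ih _ ?_ γ e (hγc ▸ h) rfl
      rw [← hs, map_add, map_add]
      exact add_lt_add_left hγ _

end Exchange

section ToricRing

variable (K : Type) [Field K] {n d : ℕ} (a : Fin n → (Fin d →₀ ℕ))

lemma toricRing_eq_range : toricRing K a = (toricMap K a).range :=
  Algebra.adjoin_range_eq_range_aeval K _

def toricRingMap : MvPolynomial (Fin n) K →ₐ[K] toricRing K a :=
  (toricMap K a).codRestrict _ fun p => toricRing_eq_range K a ▸ ⟨p, rfl⟩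

variable {K a}

lemma toricRingMap_surjective : Function.Surjective (toricRingMap K a) := fun y => by
  obtain ⟨p, hp⟩ := (toricRing_eq_range K a).le y.2
  exact ⟨p, Subtype.ext hp⟩

lemma toricRingMap_X (i : Fin n) : toricRingMap K a (X i) = toricGen K a i :=
  Subtype.ext (aeval_X _ i)

lemma toricGen_mul_toricGen {i k j l : Fin n} (h : a i + a k = a j + a l) :
    toricGen K a i * toricGen K a k = toricGen K a j * toricGen K a l :=
  Subtype.ext (by simp [toricGen, monomial_mul, h])

lemma span_toricGen_image (L : Set (Fin n)) :
    Ideal.span (toricGen K a '' L) = (Ideal.span (X '' L)).map (toricRingMap K a) := by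
  rw [Ideal.map_span, Set.image_image]
  simp only [toricRingMap_X]

theorem mem_span_toricGen_image_iff {L : Set (Fin n)} {y : toricRing K a} :
    y ∈ Ideal.span (toricGen K a '' L) ↔
      ∀ b ∈ (y : MvPolynomial (Fin d) K).support,
        ∃ l ∈ L, ∃ c, b = a l + linearCombination ℕ a c := by
  rw [span_toricGen_image, Ideal.mem_map_iff_of_surjective _ toricRingMap_surjective]
  constructor
  · rintro ⟨q, hq, rfl⟩ b hb
    obtain ⟨γ, hγ, rfl⟩ := exists_mem_support_of_mem_support_toricMap hb
    obtain ⟨l, hl, hγl⟩ := mem_ideal_span_X_image.mp hq γ hγ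
    refine ⟨l, hl, γ - single l 1, ?_⟩
    conv_lhs => rw [← add_tsub_cancel_of_le (single_le_iff.mpr (Nat.one_le_iff_ne_zero.mpr hγl))]
    rw [map_add, linearCombination_single, one_smul]
  · intro hy
    let M := ((Ideal.span (X '' L)).restrictScalars K).map (toricMap K a).toLinearMap
    have hterm : ∀ b ∈ (y : MvPolynomial (Fin d) K).support,
        monomial b (coeff b (y : MvPolynomial (Fin d) K)) ∈ M := by
      intro b hb
      obtain ⟨l, hl, c, rfl⟩ := hy b hb
      refine ⟨X l * monomial c (coeff (a l + linearCombination ℕ a c) y),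
        Ideal.mul_mem_right _ _ (Ideal.subset_span ⟨l, hl, rfl⟩), ?_⟩
      rw [AlgHom.toLinearMap_apply, map_mul, toricMap_monomial, aeval_X, monomial_mul, one_mul]
    obtain ⟨q, hq, hqy⟩ : (y : MvPolynomial (Fin d) K) ∈ M :=
      (y : MvPolynomial (Fin d) K).as_sum ▸ Submodule.sum_mem M hterm
    exact ⟨q, hq, Subtype.ext hqy⟩

theorem colon_span_toricGen_image {L : Set (Fin n)} {j : Fin n}
    (hL : ∀ i ∈ L, HasQuadraticColon a i j) :
    (Ideal.span (toricGen K a '' L)).colon (Ideal.span {toricGen K a j}) =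
      Ideal.span (toricGen K a ''
        {l | toricGen K a l * toricGen K a j ∈ Ideal.span (toricGen K a '' L)}) := by
  refine le_antisymm (fun x hx => ?_) (Ideal.span_le.mpr ?_)
  · rw [Ideal.mem_colon_span_singleton, mem_span_toricGen_image_iff] at hx
    rw [mem_span_toricGen_image_iff]
    intro b hb
    obtain ⟨p, rfl⟩ := toricRingMap_surjective x
    obtain ⟨γ, -, rfl⟩ := exists_mem_support_of_mem_support_toricMap hb
    have hbj : linearCombination ℕ a γ + a j ∈
        (↑(toricRingMap K a p * toricGen K a j) : MvPolynomial (Fin d) K).support := by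
      rwa [MulMemClass.coe_mul, toricGen, mem_support_iff, coeff_mul_monomial, mul_one,
        ← mem_support_iff]
    obtain ⟨i, hi, e, he⟩ := hx _ hbj
    obtain ⟨l, k, c, hγ, hl⟩ := hL i hi γ e (by rw [add_comm, he])
    refine ⟨l, ?_, c, hγ⟩
    rw [Set.mem_ofPred_eq, toricGen_mul_toricGen (j := i) (l := k) (by rw [add_comm, hl])]
    exact Ideal.mul_mem_right _ _ (Ideal.subset_span ⟨i, hi, rfl⟩)
  · rintro _ ⟨l, hl, rfl⟩
    exact Ideal.mem_colon_span_singleton.mpr hl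

theorem toricStronglyKoszul_of_hasQuadraticColon (h : ∀ i j, i < j → HasQuadraticColon a i j) :
    ToricStronglyKoszul K a := by
  intro r c hc j
  have hcolon := colon_span_toricGen_image (K := K) (L := c '' {k | k < j}) (j := c j)
    (by rintro _ ⟨k, hk, rfl⟩; exact h _ _ (hc hk))
  rw [Set.image_image] at hcolon
  exact ⟨_, Set.image_subset_range _ _, hcolon⟩

end ToricRing

end

theorem reducedGB_binomial_condition_implies_stronglyKoszul_general
    (K : Type) [Field K] {n d : ℕ} (a : Fin n → (Fin d →₀ ℕ))
    (H : ∀ i j : Fin n, i < j →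
      ∃ m : MonomialOrder (Fin n), ∃ G : Finset (MvPolynomial (Fin n) K),
        IsReducedGB m.ltRel (toricIdeal K a) G ∧
        ∀ g ∈ G, ∀ dd : Fin n →₀ ℕ, IsInitialExp m.ltRel g dd →
          (dd i ≠ 0 → dd j = 0 →
            ∃ k l : Fin n, g = X i * X k - X j * X l) ∧
          (dd j ≠ 0 → dd i = 0 →
            ∃ k l : Fin n, g = X j * X l - X i * X k)) :
    ToricStronglyKoszul K a := by
  refine toricStronglyKoszul_of_hasQuadraticColon fun i j hij => ?_
  obtain ⟨m, G, hGB, hG⟩ := H i j hij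
  refine hasQuadraticColon_of_isGroebnerBasis hij.ne hGB.isGroebnerBasis
    (fun g hg β hβ => (hG g hg β hβ).1) (fun g hg β hβ hj hi => ?_)
  obtain ⟨k, l, hg⟩ := (hG g hg β hβ).2 hj hi
  exact ⟨l, k, hg⟩

/-- **Lemma 1.1.** Suppose that for each pair `i < j` there is a monomial order `≺`
such that every binomial `g` in the reduced Gröbner basis of the toric ideal `I_A`
satisfies: (i) if `x_i ∣ in_≺(g)` and `x_j ∤ in_≺(g)` then `g = x_i x_k - x_j x_l`
for some `k, l`; (ii) if `x_j ∣ in_≺(g)` and `x_i ∤ in_≺(g)` then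
`g = x_j x_l - x_i x_k` for some `k, l`.  Then `K[A]` is strongly Koszul. -/
theorem reducedGB_binomial_condition_implies_stronglyKoszul
    (K : Type) [Field K] {n d : ℕ} (a : Fin n → (Fin d →₀ ℕ))
    (δ : ℕ) (hdeg : ∀ i, expDeg (a i) = δ) (hinj : Function.Injective a)
    (H : ∀ i j : Fin n, i < j →
      ∃ m : MonomialOrder (Fin n), ∃ G : Finset (MvPolynomial (Fin n) K),
        IsReducedGB m.ltRel (toricIdeal K a) G ∧
        ∀ g ∈ G, ∀ dd : Fin n →₀ ℕ, IsInitialExp m.ltRel g dd →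
          (dd i ≠ 0 → dd j = 0 →
            ∃ k l : Fin n, g = X i * X k - X j * X l) ∧
          (dd j ≠ 0 → dd i = 0 →
            ∃ k l : Fin n, g = X j * X l - X i * X k)) :
    ToricStronglyKoszul K a :=
  reducedGB_binomial_condition_implies_stronglyKoszul_general K a H
end

section
/- Let K be a field and A = {u_1,...,u_n} a set of monomials of the same degree in K[t_1,...,t_d]. Suppose that for each pair 1 ≤ i < j ≤ n there exists an ordering x_{i_1} < x_{i_2} < ⋯ < x_{i_n} of the variables with {i_1, i_2} = {i, j} such that every monomial in G(in_{<_rlex}(I_A)) that is divisible by x_{i_2} is quadratic, where <_rlex is the reverse lexicographic order induced by this ordering. Then the toric ring K[A] is strongly Koszul. -/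
/-!
Common definitions: toric ideals/rings of monomial families, strong Koszulness
with respect to a system of algebra generators, initial ideals with respect to
a relation on exponent vectors, (reduced) Gröbner bases, the (graded) reverse
lexicographic order induced by an ordering of the variables, minimal monomial
generators, and compressedness.
-/

open MvPolynomial

open MvPolynomial

/-!
Colon ideals of monomial ideals in `K[A]` are spanned by monomials, so it suffices to show: if
`t^σ u_g ∈ (u_h)` and `x_v < x_w < ⋯` is the ordering supplied for the pair `{g, h} = {v, w}`,
then `t^σ ∈ u_k K[A]` for some `k` with `u_k u_g ∈ (u_h)`. Write `t^σ u_g = π(x^L) = π(x^R)` with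
`x_g ∣ x^L` and `x_h ∣ x^R` (on exponent vectors `π` is `Finsupp.linearCombination ℕ a`), and
reduce both monomials, one minimal generator of `in(I_A)` at a time, to the standard monomial of
their common fibre. Reducing by a generator prime to `x_w` never lowers the exponents of `x_v`
(the smallest variable) and of `x_w`. A generator divisible by `x_w` is quadratic, `x_w x_k`, and
its smaller sibling must be `x_v x_β`; then `u_w u_k = u_v u_β` provides `k`. If this never
happens, the standard monomial is divisible by `x_g x_h`, and `k = h` works.
-/

open Finsupp (linearCombination single degree)
open scoped Pointwise

section Exponents

variable {n d : ℕ}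

theorem expDeg_eq_degree (x : Fin n →₀ ℕ) : expDeg x = degree x := rfl

theorem exists_eq_single_add_single_of_degree_eq_two {x : Fin n →₀ ℕ} (hx : degree x = 2)
    {i : Fin n} (hi : x i ≠ 0) : ∃ k, x = single i 1 + single k 1 := by
  have hle : single i 1 ≤ x := Finsupp.single_le_iff.mpr (Nat.one_le_iff_ne_zero.mpr hi)
  obtain ⟨y, rfl⟩ := le_iff_exists_add.mp hle
  have hy : degree y = 1 := by
    rw [map_add, Finsupp.degree_single] at hx
    omega
  obtain ⟨k, rfl⟩ : y ∈ Set.range fun k => single k 1 := Finsupp.range_single_one ▸ hy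
  exact ⟨k, rfl⟩

variable (a : Fin n → (Fin d →₀ ℕ)) {δ : ℕ} (hdeg : ∀ i, degree (a i) = δ)
include hdeg

theorem degree_linearCombination (y : Fin n →₀ ℕ) :
    degree (linearCombination ℕ a y) = degree y * δ := by
  induction y using Finsupp.induction_linear with
  | zero => simp
  | add y z hy hz => simp only [map_add, hy, hz, add_mul]
  | single i k => simp [Finsupp.linearCombination_single, hdeg]

theorem degree_eq_of_linearCombination_eq (hδ : 0 < δ) {y z : Fin n →₀ ℕ}
    (h : linearCombination ℕ a y = linearCombination ℕ a z) : degree y = degree z := by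
  have := congrArg degree h
  rw [degree_linearCombination a hdeg, degree_linearCombination a hdeg] at this
  exact Nat.eq_of_mul_eq_mul_right hδ this

theorem finite_setOf_linearCombination_eq (hδ : 0 < δ) (σ : Fin d →₀ ℕ) :
    {y | linearCombination ℕ a y = σ}.Finite := by
  refine (Finsupp.finite_of_degree_le (degree σ)).subset fun y hy => ?_
  rw [Set.mem_ofPred_eq, ← hy, degree_linearCombination a hdeg]
  exact Nat.le_mul_of_pos_right _ hδ

end Exponents

section ToricRing

variable {K : Type} [Field K] {n d : ℕ} (a : Fin n → (Fin d →₀ ℕ))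

theorem aeval_monomial_eq_monomial_linearCombination (y : Fin n →₀ ℕ) (r : K) :
    aeval (fun i => monomial (a i) (1 : K)) (monomial y r) =
      monomial (linearCombination ℕ a y) r := by
  rw [aeval_monomial, Finsupp.linearCombination_apply, monomial_finsupp_sum_index,
    algebraMap_eq]
  simp [monomial_pow]

theorem monomial_sub_monomial_mem_toricIdeal {y z : Fin n →₀ ℕ}
    (h : linearCombination ℕ a y = linearCombination ℕ a z) :
    monomial y (1 : K) - monomial z 1 ∈ toricIdeal K a := by
  change aeval _ (_ - _) = 0
  rw [map_sub, aeval_monomial_eq_monomial_linearCombination,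
    aeval_monomial_eq_monomial_linearCombination, h, sub_self]

theorem exists_ne_mem_support_of_mem_toricIdeal {f : MvPolynomial (Fin n) K}
    (hf : f ∈ toricIdeal K a) {y : Fin n →₀ ℕ} (hy : y ∈ f.support) :
    ∃ z ∈ f.support, z ≠ y ∧ linearCombination ℕ a z = linearCombination ℕ a y := by
  classical
  by_contra! hne
  have hcoeff : coeff (linearCombination ℕ a y) (aeval (fun i => monomial (a i) (1 : K)) f)
      = coeff y f := by
    conv_lhs => rw [f.as_sum, map_sum]
    simp only [aeval_monomial_eq_monomial_linearCombination, coeff_sum, coeff_monomial]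
    rw [Finset.sum_eq_single_of_mem y hy fun z hz hzy => if_neg (hne z hz hzy), if_pos rfl]
  rw [show aeval (fun i => monomial (a i) (1 : K)) f = 0 from hf, coeff_zero] at hcoeff
  exact mem_support_iff.mp hy hcoeff.symm

theorem mem_toricRing_iff {f : MvPolynomial (Fin d) K} :
    f ∈ toricRing K a ↔ f ∈ restrictSupport K (Set.range (linearCombination ℕ a)) := by
  constructor
  · intro hf
    induction hf using Algebra.adjoin_induction with
    | mem x hx =>
      obtain ⟨i, rfl⟩ := hx
      exact (monomial_mem_restrictSupport K).mpr (.inl ⟨single i 1, by simp⟩)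
    | algebraMap r =>
      rw [algebraMap_eq, C_apply]
      exact (monomial_mem_restrictSupport K).mpr (.inl ⟨0, map_zero _⟩)
    | add x y _ _ hx hy => exact add_mem hx hy
    | mul x y _ _ hx hy =>
      refine restrictSupport_mono K ?_ (restrictSupport_add K _ _ ▸ Submodule.mul_mem_mul hx hy)
      rintro _ ⟨_, ⟨y, rfl⟩, _, ⟨z, rfl⟩, rfl⟩
      exact ⟨y + z, map_add _ y z⟩
  · intro hf
    rw [f.as_sum]
    refine sum_mem fun σ hσ => ?_
    obtain ⟨y, rfl⟩ := hf hσ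
    rw [← aeval_monomial_eq_monomial_linearCombination, toricRing,
      Algebra.adjoin_range_eq_range_aeval]
    exact AlgHom.mem_range_self _ _

theorem mem_span_toricGen_iff (T : Set (Fin n)) (x : toricRing K a) :
    x ∈ Ideal.span (toricGen K a '' T) ↔
      (x : MvPolynomial (Fin d) K) ∈
        restrictSupport K (a '' T + Set.range (linearCombination ℕ a)) := by
  have hsub :
      a '' T + Set.range (linearCombination ℕ a) ⊆ Set.range (linearCombination ℕ a) := by
    rintro _ ⟨_, ⟨i, -, rfl⟩, _, ⟨y, rfl⟩, rfl⟩
    exact ⟨single i 1 + y, by simp⟩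
  constructor
  · intro hx
    induction hx using Submodule.span_induction with
    | mem x hx =>
      obtain ⟨i, hi, rfl⟩ := hx
      exact (monomial_mem_restrictSupport K).mpr
        (.inl ⟨a i, ⟨i, hi, rfl⟩, 0, ⟨0, map_zero _⟩, add_zero _⟩)
    | zero => exact zero_mem _
    | add x y _ _ hx hy => exact add_mem hx hy
    | smul r x _ hx =>
      have hmul := Submodule.mul_mem_mul ((mem_toricRing_iff a).mp r.2) hx
      rw [← restrictSupport_add] at hmul
      refine restrictSupport_mono K ?_ hmul
      rintro _ ⟨_, ⟨y, rfl⟩, _, ⟨_, ⟨i, hi, rfl⟩, _, ⟨z, rfl⟩, rfl⟩, rfl⟩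
      refine ⟨a i, ⟨i, hi, rfl⟩, _, ⟨y + z, rfl⟩, ?_⟩
      dsimp only
      rw [map_add, add_left_comm]
  · intro hx
    suffices ∀ p (hp : p ∈ restrictSupport K (a '' T + Set.range (linearCombination ℕ a))),
        ∃ hp' : p ∈ toricRing K a, ⟨p, hp'⟩ ∈ Ideal.span (toricGen K a '' T) from
      this x hx |>.2
    intro p hp
    rw [restrictSupport_eq_span] at hp
    induction hp using Submodule.span_induction with
    | mem p hp =>
      obtain ⟨σ, hσ, rfl⟩ := hp
      have hmem : monomial σ (1 : K) ∈ toricRing K a := (mem_toricRing_iff a).mpr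
        (restrictSupport_mono K hsub ((monomial_mem_restrictSupport K).mpr (.inl hσ)))
      refine ⟨hmem, ?_⟩
      obtain ⟨_, ⟨i, hi, rfl⟩, _, ⟨y, rfl⟩, rfl⟩ := hσ
      have hy : monomial (linearCombination ℕ a y) (1 : K) ∈ toricRing K a :=
        (mem_toricRing_iff a).mpr ((monomial_mem_restrictSupport K).mpr (.inl ⟨y, rfl⟩))
      have hfactor : (⟨_, hmem⟩ : toricRing K a) = ⟨_, hy⟩ * toricGen K a i :=
        Subtype.ext (by simp [toricGen, add_comm])
      rw [hfactor]
      exact Ideal.mul_mem_left _ _ (Ideal.subset_span ⟨i, hi, rfl⟩)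
    | zero => exact ⟨zero_mem _, zero_mem _⟩
    | add p q _ _ hp hq => exact ⟨add_mem hp.1 hq.1, add_mem hp.2 hq.2⟩
    | smul r p _ hp =>
      exact ⟨Subalgebra.smul_mem _ hp.1 r, Submodule.smul_of_tower_mem _ r hp.2⟩

end ToricRing

section RevLex

variable {n : ℕ} (ord : Fin n ≃ Fin n)

noncomputable def rlexKey (x : Fin n →₀ ℕ) : ℕ ×ₗ (Lex (Fin n → ℕ))ᵒᵈ :=
  toLex (degree x, OrderDual.toDual (toLex fun p => x (ord p)))

theorem rlexLT_iff_rlexKey_lt {x y : Fin n →₀ ℕ} :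
    rlexLT ord x y ↔ rlexKey ord x < rlexKey ord y := by
  rw [rlexKey, rlexKey, Prod.Lex.toLex_lt_toLex, OrderDual.toDual_lt_toDual]
  refine or_congr .rfl (and_congr_right' (exists_congr fun p => ?_))
  exact and_comm.trans (and_congr_left' (forall₂_congr fun q _ => eq_comm))

theorem rlexKey_injective : Function.Injective (rlexKey ord) := by
  intro x y h
  have h' : (fun p => x (ord p)) = fun p => y (ord p) :=
    toLex.injective (OrderDual.toDual.injective (congrArg (fun k => (ofLex k).2) h))
  ext i
  simpa using congrFun h' (ord.symm i)

theorem rlexLT_or_rlexLT_of_ne {x y : Fin n →₀ ℕ} (h : x ≠ y) :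
    rlexLT ord x y ∨ rlexLT ord y x := by
  simp only [rlexLT_iff_rlexKey_lt]
  exact lt_or_gt_of_ne ((rlexKey_injective ord).ne h)

theorem ne_of_rlexLT {x y : Fin n →₀ ℕ} (h : rlexLT ord x y) : x ≠ y := by
  rintro rfl
  exact lt_irrefl _ ((rlexLT_iff_rlexKey_lt ord).mp h)

theorem Set.Finite.wellFoundedOn_rlexLT {s : Set (Fin n →₀ ℕ)} (hs : s.Finite) :
    s.WellFoundedOn (rlexLT ord) := by
  have : rlexLT ord = Function.onFun (· < ·) (rlexKey ord) := by
    ext x y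
    exact rlexLT_iff_rlexKey_lt ord
  rw [this, ← Set.wellFoundedOn_image]
  exact (hs.image _).wellFoundedOn

theorem rlexLT_add_right {x y : Fin n →₀ ℕ} (h : rlexLT ord x y) (z : Fin n →₀ ℕ) :
    rlexLT ord (x + z) (y + z) := by
  simpa only [rlexLT, expDeg_eq_degree, map_add, Finsupp.add_apply, add_lt_add_iff_right,
    add_left_inj] using h

theorem apply_le_apply_of_rlexLT {x y : Fin n →₀ ℕ} (h : rlexLT ord x y)
    (hdeg : degree x = degree y) {p : Fin n} (hagree : ∀ q < p, x (ord q) = y (ord q)) :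
    y (ord p) ≤ x (ord p) := by
  obtain hlt | ⟨-, p₀, hp₀, hagree₀⟩ := h
  · exact absurd hdeg hlt.ne
  obtain hp | rfl | hp := lt_trichotomy p p₀
  · exact (hagree₀ p hp).ge
  · exact hp₀.le
  · exact absurd (hagree p₀ hp) hp₀.ne'

end RevLex

section InitialIdeal

variable {K : Type} [Field K] {n : ℕ}

theorem isInitialExp_monomial_sub_monomial_s1 {lt : (Fin n →₀ ℕ) → (Fin n →₀ ℕ) → Prop}
    {y z : Fin n →₀ ℕ} (hne : z ≠ y) (hlt : lt z y) :
    IsInitialExp lt (monomial y (1 : K) - monomial z 1) y := by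
  classical
  refine ⟨by simp [coeff_monomial, hne], fun x hx hxy => ?_⟩
  obtain hx | hx := Finset.mem_union.mp (support_sub _ _ _ hx)
  · exact absurd (Finset.mem_singleton.mp (support_monomial_subset hx)) hxy
  · rwa [Finset.mem_singleton.mp (support_monomial_subset hx)]

theorem exists_isMinGen_le (I : Ideal (MvPolynomial (Fin n) K)) {s : Fin n →₀ ℕ}
    (hs : monomial s (1 : K) ∈ I) : ∃ dd, IsMinGen I dd ∧ dd ≤ s := by
  induction s using WellFoundedLT.induction with
  | _ s ih =>
    by_cases hmin : IsMinGen I s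
    · exact ⟨s, hmin, le_rfl⟩
    obtain ⟨t, hts, hne, ht⟩ : ∃ t ≤ s, t ≠ s ∧ monomial t (1 : K) ∈ I := by
      simpa [IsMinGen, hs] using hmin
    obtain ⟨dd, hdd, hle⟩ := ih t (lt_of_le_of_ne hts hne) ht
    exact ⟨dd, hdd, hle.trans hts⟩

theorem exists_isInitialExp_of_isMinGen (lt : (Fin n →₀ ℕ) → (Fin n →₀ ℕ) → Prop)
    (I : Ideal (MvPolynomial (Fin n) K)) {dd : Fin n →₀ ℕ}
    (h : IsMinGen (initialIdeal lt I) dd) : ∃ f ∈ I, IsInitialExp lt f dd := by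
  have hspan : initialIdeal lt I =
      Ideal.span ((monomial · (1 : K)) '' {s | ∃ f ∈ I, IsInitialExp lt f s}) := by
    rw [initialIdeal]
    congr 1
    ext m
    aesop
  have hmem := h.1
  rw [hspan, mem_ideal_span_monomial_image] at hmem
  obtain ⟨s, hs, hle⟩ := hmem dd (by simp)
  obtain rfl : s = dd := by
    by_contra hne
    exact h.2 s hle hne (hspan ▸ Ideal.subset_span ⟨s, hs, rfl⟩)
  exact hs

end InitialIdeal

section ToricInitialIdeal

variable {K : Type} [Field K] {n d : ℕ} (a : Fin n → (Fin d →₀ ℕ)) (ord : Fin n ≃ Fin n)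

theorem monomial_mem_initialIdeal_of_rlexLT {y z : Fin n →₀ ℕ}
    (h : linearCombination ℕ a y = linearCombination ℕ a z) (hlt : rlexLT ord z y) :
    monomial y (1 : K) ∈ initialIdeal (rlexLT ord) (toricIdeal K a) :=
  Ideal.subset_span ⟨_, monomial_sub_monomial_mem_toricIdeal a h, y,
    isInitialExp_monomial_sub_monomial_s1 (ne_of_rlexLT ord hlt) hlt, rfl⟩

theorem eq_of_linearCombination_eq_of_notMem_initialIdeal {y z : Fin n →₀ ℕ}
    (h : linearCombination ℕ a y = linearCombination ℕ a z)
    (hy : monomial y (1 : K) ∉ initialIdeal (rlexLT ord) (toricIdeal K a))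
    (hz : monomial z (1 : K) ∉ initialIdeal (rlexLT ord) (toricIdeal K a)) : y = z := by
  by_contra hne
  obtain hlt | hlt := rlexLT_or_rlexLT_of_ne ord hne
  · exact hz (monomial_mem_initialIdeal_of_rlexLT a ord h.symm hlt)
  · exact hy (monomial_mem_initialIdeal_of_rlexLT a ord h hlt)

theorem exists_rlexLT_of_isMinGen {dd : Fin n →₀ ℕ}
    (h : IsMinGen (initialIdeal (rlexLT ord) (toricIdeal K a)) dd) :
    ∃ c, rlexLT ord c dd ∧ linearCombination ℕ a c = linearCombination ℕ a dd := by
  obtain ⟨f, hf, hdd, hinit⟩ := exists_isInitialExp_of_isMinGen _ _ h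
  obtain ⟨c, hc, hne, hπ⟩ := exists_ne_mem_support_of_mem_toricIdeal a hf hdd
  exact ⟨c, hinit c hc hne, hπ⟩

end ToricInitialIdeal

theorem exists_exchange_of_add_eq {n d : ℕ} {a : Fin n → (Fin d →₀ ℕ)} {v w g h k β : Fin n}
    (hgh : g = v ∧ h = w ∨ g = w ∧ h = v) (hβ : a w + a k = a v + a β) {σ : Fin d →₀ ℕ}
    {y : Fin n →₀ ℕ} (hσ : σ = a w + a k + linearCombination ℕ a y) :
    ∃ k, (∃ y, σ = a g + a k + linearCombination ℕ a y) ∧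
      ∃ z, a k + a g = a h + linearCombination ℕ a z := by
  rcases hgh with ⟨rfl, rfl⟩ | ⟨rfl, rfl⟩
  · exact ⟨β, ⟨y, hβ ▸ hσ⟩, single k 1, by simp [hβ, add_comm]⟩
  · exact ⟨k, ⟨y, hσ⟩, single β 1, by simp [hβ, add_comm]⟩

section Exchange

variable {K : Type} [Field K] {n d : ℕ} {a : Fin n → (Fin d →₀ ℕ)} {δ : ℕ}
  (hdeg : ∀ i, degree (a i) = δ) (hδ : 0 < δ) (ord : Fin n ≃ Fin n) {v w : Fin n}
  (hv : (ord.symm v : ℕ) = 0) (hw : (ord.symm w : ℕ) = 1) (hinj : Function.Injective a)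
include hdeg hδ hv hw hinj

theorem exists_add_eq_of_rlexLT_single_add_single {k : Fin n} {c : Fin n →₀ ℕ}
    (hlt : rlexLT ord c (single w 1 + single k 1))
    (hπ : linearCombination ℕ a c = linearCombination ℕ a (single w 1 + single k 1)) :
    ∃ β, a w + a k = a v + a β := by
  have hdeg₂ : degree c = degree (single w 1 + single k 1) :=
    degree_eq_of_linearCombination_eq a hdeg hδ hπ
  have hc₂ : degree c = 2 := by simpa using hdeg₂
  have hcv : c v ≠ 0 := by
    -- otherwise `c` agrees with `x_w x_k` at `v`, hence dominates it at `w`, so `c = x_w x_k`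
    intro hcv
    have hagree :
        ∀ q < ord.symm w, c (ord q) = (single w 1 + single k 1 : Fin n →₀ ℕ) (ord q) := by
      intro q hq
      obtain rfl : q = ord.symm v := Fin.ext (by rw [hv]; omega)
      have := apply_le_apply_of_rlexLT ord hlt hdeg₂ (p := ord.symm v) (by simp [Fin.lt_def, hv])
      simp only [Equiv.apply_symm_apply] at this ⊢
      omega
    have hcw := apply_le_apply_of_rlexLT ord hlt hdeg₂ hagree
    obtain ⟨γ, rfl⟩ := exists_eq_single_add_single_of_degree_eq_two hc₂ (i := w)
      (by simp at hcw; omega)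
    obtain rfl : γ = k := hinj (by simpa using hπ)
    exact ne_of_rlexLT ord hlt rfl
  obtain ⟨β, rfl⟩ := exists_eq_single_add_single_of_degree_eq_two hc₂ hcv
  exact ⟨β, by simpa using hπ.symm⟩

variable (hq : ∀ dd : Fin n →₀ ℕ,
  IsMinGen (initialIdeal (rlexLT ord) (toricIdeal K a)) dd → dd w ≠ 0 → expDeg dd = 2)
include hq

theorem exists_add_eq_or_exists_rlexLT {x : Fin n →₀ ℕ}
    (hx : monomial x (1 : K) ∈ initialIdeal (rlexLT ord) (toricIdeal K a)) :
    (∃ k β y, linearCombination ℕ a x = a w + a k + linearCombination ℕ a y ∧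
      a w + a k = a v + a β) ∨
    ∃ x', rlexLT ord x' x ∧ linearCombination ℕ a x' = linearCombination ℕ a x ∧
      x v ≤ x' v ∧ x w ≤ x' w := by
  obtain ⟨dd, hmin, hle⟩ := exists_isMinGen_le _ hx
  obtain ⟨c, hlt, hπ⟩ := exists_rlexLT_of_isMinGen a ord hmin
  obtain ⟨s, rfl⟩ := le_iff_exists_add.mp hle
  by_cases hdw : dd w = 0
  · -- `v` is the smallest variable, so the rlex-smaller `c` has at least the `v`-exponent of `dd`
    have hcv : dd v ≤ c v := by
      simpa using apply_le_apply_of_rlexLT ord hlt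
        (degree_eq_of_linearCombination_eq a hdeg hδ hπ) (p := ord.symm v)
        fun q hqv => absurd hqv (by simp [Fin.lt_def, hv])
    refine .inr ⟨c + s, rlexLT_add_right ord hlt s, by simp [hπ], ?_, ?_⟩ <;> simp <;> omega
  · obtain ⟨k, rfl⟩ := exists_eq_single_add_single_of_degree_eq_two (hq _ hmin hdw) hdw
    obtain ⟨β, hβ⟩ := exists_add_eq_of_rlexLT_single_add_single hdeg hδ ord hv hw hinj hlt hπ
    exact .inl ⟨k, β, s, by simp [add_assoc], hβ⟩

theorem exists_standard_or_exists_add_eq (x : Fin n →₀ ℕ) :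
    (∃ k β y, linearCombination ℕ a x = a w + a k + linearCombination ℕ a y ∧
      a w + a k = a v + a β) ∨
    ∃ y, linearCombination ℕ a y = linearCombination ℕ a x ∧
      monomial y (1 : K) ∉ initialIdeal (rlexLT ord) (toricIdeal K a) ∧
      x v ≤ y v ∧ x w ≤ y w := by
  generalize hσ : linearCombination ℕ a x = σ
  lift x to {z | linearCombination ℕ a z = σ} using hσ
  have hwf : Set.WellFoundedOn _ (rlexLT ord) :=
    (finite_setOf_linearCombination_eq a hdeg hδ σ).wellFoundedOn_rlexLT ord
  induction x using WellFounded.induction hwf with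
  | _ x ih =>
    obtain ⟨x, rfl⟩ := x
    by_cases hx : monomial x (1 : K) ∈ initialIdeal (rlexLT ord) (toricIdeal K a)
    · obtain hquad | ⟨x', hlt, hπ, hv', hw'⟩ :=
        exists_add_eq_or_exists_rlexLT hdeg hδ ord hv hw hinj hq hx
      · exact .inl hquad
      · refine (ih ⟨x', hπ⟩ hlt).imp_right fun ⟨y, hy, hys, hyv, hyw⟩ => ?_
        exact ⟨y, hy, hys, hv'.trans hyv, hw'.trans hyw⟩
    · exact .inr ⟨x, rfl, hx, le_rfl, le_rfl⟩

theorem exists_exchange {g h : Fin n} (hgh : g = v ∧ h = w ∨ g = w ∧ h = v) {L R : Fin n →₀ ℕ}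
    (hLR : linearCombination ℕ a L = linearCombination ℕ a R) (hL : L g ≠ 0) (hR : R h ≠ 0) :
    ∃ k, (∃ y, linearCombination ℕ a L = a g + a k + linearCombination ℕ a y) ∧
      ∃ z, a k + a g = a h + linearCombination ℕ a z := by
  obtain ⟨k, β, y, hy, hβ⟩ | ⟨N, hN, hNs, hNv, hNw⟩ :=
    exists_standard_or_exists_add_eq (K := K) hdeg hδ ord hv hw hinj hq L
  · exact exists_exchange_of_add_eq hgh hβ hy
  obtain ⟨k, β, y, hy, hβ⟩ | ⟨N', hN', hN's, hN'v, hN'w⟩ :=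
    exists_standard_or_exists_add_eq (K := K) hdeg hδ ord hv hw hinj hq R
  · exact exists_exchange_of_add_eq hgh hβ (hLR ▸ hy)
  obtain rfl := eq_of_linearCombination_eq_of_notMem_initialIdeal a ord
    (hN.trans (hLR.trans hN'.symm)) hNs hN's
  have hvw : v ≠ w := fun e => by simp [e] at hv; omega
  obtain ⟨hg, hh, hne⟩ : N g ≠ 0 ∧ N h ≠ 0 ∧ g ≠ h := by
    rcases hgh with ⟨rfl, rfl⟩ | ⟨rfl, rfl⟩
    · exact ⟨by omega, by omega, hvw⟩
    · exact ⟨by omega, by omega, hvw.symm⟩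
  have hle : single g 1 + single h 1 ≤ N := by
    intro i
    simp only [Finsupp.add_apply, Finsupp.single_apply]
    split_ifs <;> subst_vars <;> omega
  obtain ⟨y, rfl⟩ := le_iff_exists_add.mp hle
  exact ⟨h, ⟨y, by rw [← hN]; simp⟩, single g 1, by simp [add_comm]⟩

end Exchange

section Colon

variable {K : Type} [Field K] {n d : ℕ} (a : Fin n → (Fin d →₀ ℕ))

theorem toricGen_mul_mem_span_iff (T : Set (Fin n)) (k g : Fin n) :
    toricGen K a k * toricGen K a g ∈ Ideal.span (toricGen K a '' T) ↔
      a k + a g ∈ a '' T + Set.range (linearCombination ℕ a) := by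
  rw [mem_span_toricGen_iff]
  change monomial (a k) 1 * monomial (a g) 1 ∈ _ ↔ _
  rw [monomial_mul, one_mul, monomial_mem_restrictSupport]
  simp

theorem colon_span_toricGen_eq_span (T : Set (Fin n)) (g : Fin n)
    (hex : ∀ y z, ∀ i ∈ T, a g + linearCombination ℕ a y = a i + linearCombination ℕ a z →
      ∃ k, (∃ y', linearCombination ℕ a y = a k + linearCombination ℕ a y') ∧
        a k + a g ∈ a '' T + Set.range (linearCombination ℕ a)) :
    (Ideal.span (toricGen K a '' T)).colon (Ideal.span {toricGen K a g}) =
      Ideal.span (toricGen K a ''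
        {k | toricGen K a k * toricGen K a g ∈ Ideal.span (toricGen K a '' T)}) := by
  refine le_antisymm (fun x hx => ?_) (Ideal.span_le.mpr ?_)
  · rw [Ideal.mem_colon_span_singleton, mem_span_toricGen_iff] at hx
    rw [mem_span_toricGen_iff]
    intro σ hσ
    obtain ⟨y, rfl⟩ := (mem_toricRing_iff a).mp x.2 hσ
    have hmul : linearCombination ℕ a y + a g ∈
        ((x * toricGen K a g : toricRing K a) : MvPolynomial (Fin d) K).support := by
      change _ ∈ ((x : MvPolynomial (Fin d) K) * monomial (a g) 1).support
      rw [mem_support_iff, coeff_mul_monomial, mul_one]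
      exact mem_support_iff.mp hσ
    obtain ⟨_, ⟨i, hi, rfl⟩, _, ⟨z, rfl⟩, hz⟩ := hx hmul
    obtain ⟨k, ⟨y', hy'⟩, hk⟩ := hex y z i hi (by rw [add_comm]; exact hz.symm)
    exact ⟨a k, ⟨k, (toricGen_mul_mem_span_iff a T k g).mpr hk, rfl⟩, _, ⟨y', rfl⟩, hy'.symm⟩
  · rintro _ ⟨k, hk, rfl⟩
    exact Ideal.mem_colon_span_singleton.mpr hk

end Colon

/-- **Theorem 1.2 (main1).**  Suppose that for each pair `i < j` there is an
ordering `x_{i_1} < x_{i_2} < ⋯ < x_{i_n}` of the variables with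
`{i_1, i_2} = {i, j}` such that every monomial in `G(in_rlex(I_A))` divisible by
the second-smallest variable `x_{i_2}` is quadratic.  Then `K[A]` is strongly
Koszul.  Here `ord : Fin n ≃ Fin n` records the ordering (`ord p` is the
`p`-th smallest variable), `v = x_{i_1}` and `w = x_{i_2}`. -/
theorem rlex_minGen_quadratic_implies_stronglyKoszul
    (K : Type) [Field K] {n d : ℕ} (a : Fin n → (Fin d →₀ ℕ))
    (δ : ℕ) (hdeg : ∀ i, expDeg (a i) = δ) (hinj : Function.Injective a)
    (H : ∀ i j : Fin n, i < j →
      ∃ ord : Fin n ≃ Fin n, ∃ v w : Fin n,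
        ({v, w} : Set (Fin n)) = {i, j} ∧
        (ord.symm v : ℕ) = 0 ∧ (ord.symm w : ℕ) = 1 ∧
        ∀ dd : Fin n →₀ ℕ,
          IsMinGen (initialIdeal (rlexLT ord) (toricIdeal K a)) dd →
          dd w ≠ 0 → expDeg dd = 2) :
    ToricStronglyKoszul K a := by
  intro r c hc j
  rw [← Set.image_image (toricGen K a) c]
  refine ⟨_, Set.image_subset_range _ _,
    colon_span_toricGen_eq_span a _ _ fun y z _ ⟨l, hl, hi⟩ hyz => ?_⟩
  subst hi
  obtain ⟨ord, v, w, hvw, hv, hw, hq⟩ := H _ _ (hc hl)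
  have hδ : 0 < δ := Nat.pos_of_ne_zero fun hδ => (hc hl).ne (hinj (by
    rw [(Finsupp.degree_eq_zero_iff _).mp ((hdeg _).trans hδ),
      (Finsupp.degree_eq_zero_iff _).mp ((hdeg _).trans hδ)]))
  have hgh : c j = v ∧ c l = w ∨ c j = w ∧ c l = v := by
    rcases Set.pair_eq_pair_iff.mp hvw with ⟨hl, hj⟩ | ⟨hj, hl⟩
    · exact .inr ⟨hj.symm, hl.symm⟩
    · exact .inl ⟨hj.symm, hl.symm⟩
  obtain ⟨k, ⟨y', hy'⟩, z', hz'⟩ := exists_exchange hdeg hδ ord hv hw hinj hq hgh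
    (L := single (c j) 1 + y) (R := single (c l) 1 + z) (by simpa using hyz) (by simp)
    (by simp)
  exact ⟨k, ⟨y', by simpa [add_assoc] using hy'⟩,
    ⟨_, ⟨c l, ⟨l, hl, rfl⟩, rfl⟩, _, ⟨z', rfl⟩, hz'.symm⟩⟩
end

section
/- Let K be a field and n ≥ 1. The toric ring K[A_n] = K[s, t_1 s, ..., t_n s, t_1^{-1} s, ..., t_n^{-1} s] ⊆ K[s, t_1^{±1}, ..., t_n^{±1}] is strongly Koszul. -/
/-!
Common definitions: toric ideals/rings of monomial families, strong Koszulness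
with respect to a system of algebra generators, initial ideals with respect to
a relation on exponent vectors, (reduced) Gröbner bases, the (graded) reverse
lexicographic order induced by an ordering of the variables, minimal monomial
generators, and compressedness.
-/

open MvPolynomial

open MvPolynomial

noncomputable section

/-- Exponents of Laurent monomials in `K[s, t_1^{±1}, …, t_n^{±1}]`:
the `s`-exponent (in `ℕ`) together with the `t`-exponents (in `ℤ`). -/
abbrev LaurentExp (n : ℕ) := ℕ × (Fin n →₀ ℤ)

/-- The Laurent polynomial ring `K[s, t_1^{±1}, …, t_n^{±1}]`. -/
abbrev LaurentRing (K : Type) [Field K] (n : ℕ) := AddMonoidAlgebra K (LaurentExp n)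

/-- The exponent vectors of the monomials
`A_n = {s, t_1 s, …, t_n s, t_1⁻¹ s, …, t_n⁻¹ s}`: index `0` gives `s`,
index `i` with `1 ≤ i ≤ n` gives `t_i s`, and index `n + i` gives `t_i⁻¹ s`. -/
def expA (n : ℕ) (m : Fin (2 * n + 1)) : LaurentExp n :=
  if h0 : (m : ℕ) = 0 then (1, 0)
  else if hx : (m : ℕ) ≤ n then
    (1, Finsupp.single ⟨(m : ℕ) - 1, by have := m.isLt; omega⟩ 1)
  else (1, - Finsupp.single ⟨(m : ℕ) - 1 - n, by have := m.isLt; omega⟩ 1)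

/-- The toric ring `K[A_n] = K[s, t_1 s, …, t_n s, t_1⁻¹ s, …, t_n⁻¹ s]`,
as a subalgebra of the Laurent polynomial ring. -/
def ringA (K : Type) [Field K] (n : ℕ) : Subalgebra K (LaurentRing K n) :=
  Algebra.adjoin K
    (Set.range fun v => (AddMonoidAlgebra.single (expA n v) (1 : K) : LaurentRing K n))

/-- The generators of `K[A_n]`, as elements of `K[A_n]`. -/
def ringAGen (K : Type) [Field K] (n : ℕ) (v : Fin (2 * n + 1)) : ringA K n :=
  ⟨AddMonoidAlgebra.single (expA n v) (1 : K),
    Algebra.subset_adjoin (Set.mem_range_self v)⟩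

/-!
`K[A_n]` is the monoid algebra of the lattice points `(m, a) ∈ ℕ × ℤⁿ` with `‖a‖₁ ≤ m` of the
cone over the cross-polytope: every such point is a sum of `m` elements of `A_n`. In a monoid
algebra the colon of a monomial ideal by a monomial is again a monomial ideal, so it suffices that
every monomial `x^e` of `(u_{i_1}, …, u_{i_{j-1}}) : u_{i_j}` is divisible by a generator lying in
this colon ideal. Write `u_{i_j} = s t^δ`, and let `u_{i_k} = s t^{δ'}` (`k < j`) be such that
`x^e u_{i_j}` is divisible by `u_{i_k}`; comparing `‖·‖₁` coordinatewise shows that `x^e` is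
divisible by `u_{i_k}` or by `s t^{-δ}`, and the latter lies in the colon ideal because
`s t^{-δ} ⋅ u_{i_j} = s² = u_{i_k} ⋅ s t^{-δ'}`.
-/

namespace AddMonoidAlgebra

variable {R M : Type*}

theorem mem_adjoin_range_single_iff [CommSemiring R] [AddCommMonoid M] {ι : Type*}
    (g : ι → M) {x : R[M]} :
    x ∈ Algebra.adjoin R (Set.range fun i => single (g i) (1 : R)) ↔
      ↑x.coeff.support ⊆ (AddSubmonoid.closure (Set.range g) : Set M) := by
  classical
  constructor
  · intro hx
    induction hx using Algebra.adjoin_induction with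
    | mem x hx =>
      obtain ⟨i, rfl⟩ := hx
      exact (Finset.coe_subset.2 Finsupp.support_single_subset).trans
        (by simpa using AddSubmonoid.subset_closure (Set.mem_range_self i))
    | algebraMap r =>
      exact (Finset.coe_subset.2 Finsupp.support_single_subset).trans (by simp)
    | add x y _ _ hx hy =>
      exact (Finset.coe_subset.2 Finsupp.support_add).trans (by simp [hx, hy])
    | mul x y _ _ hx hy =>
      refine (Finset.coe_subset.2 (support_coeff_mul_subset x y)).trans ?_
      rw [Finset.coe_add]
      rintro _ ⟨a, ha, b, hb, rfl⟩
      exact add_mem (hx ha) (hy hb)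
  · intro hx
    have hx' : x ∈ supported R R (AddSubmonoid.closure (Set.range g) : Set M) := hx
    rw [supported_eq_span_single] at hx'
    change x ∈ Subalgebra.toSubmodule (Algebra.adjoin R _)
    refine Submodule.span_le.2 ?_ hx'
    rintro _ ⟨m, hm, rfl⟩
    rw [SetLike.mem_coe, Subalgebra.mem_toSubmodule]
    induction hm using AddSubmonoid.closure_induction with
    | mem m hm =>
      obtain ⟨i, rfl⟩ := hm
      exact Algebra.subset_adjoin (Set.mem_range_self i)
    | zero => exact one_mem _
    | add a b _ _ ha hb =>
      simpa [single_mul_single] using mul_mem ha hb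

end AddMonoidAlgebra

section MonomialIdeal

open AddMonoidAlgebra

variable {K M ι : Type*} [CommRing K] [AddCommMonoid M] {R : Subalgebra K K[M]}
  {S : AddSubmonoid M} {u : ι → R} {g : ι → M}

theorem mem_span_monomials_iff (hR : ∀ x, x ∈ R ↔ ↑x.coeff.support ⊆ (S : Set M))
    (hu : ∀ i, (u i : K[M]) = single (g i) 1) {T : Set ι} {x : R} :
    x ∈ Ideal.span (u '' T) ↔
      ∀ e ∈ (x : K[M]).coeff.support, ∃ i ∈ T, ∃ s ∈ S, e = g i + s := by
  classical
  constructor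
  · intro hx
    induction hx using Submodule.span_induction with
    | mem y hy =>
      obtain ⟨i, hi, rfl⟩ := hy
      intro e he
      rw [hu, coeff_single, Finsupp.mem_support_single] at he
      exact ⟨i, hi, 0, zero_mem S, by rw [he.1, add_zero]⟩
    | zero => simp
    | add y z _ _ hy hz =>
      intro e he
      rcases Finset.mem_union.1 (Finsupp.support_add he) with he | he
      exacts [hy e he, hz e he]
    | smul a y _ hy =>
      intro e he
      obtain ⟨e₁, he₁, e₂, he₂, rfl⟩ :=
        Finset.mem_add.1 (support_coeff_mul_subset (a : K[M]) y he)
      obtain ⟨i, hi, s, hs, rfl⟩ := hy e₂ he₂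
      exact ⟨i, hi, s + e₁, add_mem hs ((hR a).1 a.2 he₁), by abel⟩
  · intro hx
    obtain ⟨y, hy, hyx⟩ : (x : K[M]) ∈ ((Ideal.span (u '' T)).restrictScalars K).map
        R.val.toLinearMap := by
      have hx' : (x : K[M]) ∈ supported K K {e | ∃ i ∈ T, ∃ s ∈ S, e = g i + s} := hx
      rw [supported_eq_span_single] at hx'
      refine Submodule.span_le.2 ?_ hx'
      rintro _ ⟨_, ⟨i, hi, s, hs, rfl⟩, rfl⟩
      have hsR : single s (1 : K) ∈ R := (hR _).2 <|
        (Finset.coe_subset.2 Finsupp.support_single_subset).trans (by simpa using hs)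
      refine ⟨u i * ⟨_, hsR⟩, Ideal.mul_mem_right _ _ (Ideal.subset_span ⟨i, hi, rfl⟩), ?_⟩
      simp [hu, single_mul_single]
    rwa [← Subtype.ext hyx]

theorem colon_span_monomials_eq_span [IsRightCancelAdd M]
    (hR : ∀ x, x ∈ R ↔ ↑x.coeff.support ⊆ (S : Set M))
    (hu : ∀ i, (u i : K[M]) = single (g i) 1) {T W : Set ι} {j : ι}
    (hW : ∀ w ∈ W, ∃ i ∈ T, ∃ s ∈ S, g w + g j = g i + s)
    (hT : ∀ e ∈ S, (∃ i ∈ T, ∃ s ∈ S, e + g j = g i + s) → ∃ w ∈ W, ∃ s ∈ S, e = g w + s) :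
    (Ideal.span (u '' T)).colon (Ideal.span {u j}) = Ideal.span (u '' W) := by
  ext x
  have hsupp : ((x * u j : R) : K[M]).coeff.support =
      (x : K[M]).coeff.support.map (addRightEmbedding (g j)) := by
    rw [Subalgebra.coe_mul, hu, support_coeff_mul_single _ _ (by simp)]
  rw [Ideal.mem_colon_span_singleton, mem_span_monomials_iff hR hu, mem_span_monomials_iff hR hu,
    hsupp, Finset.forall_mem_map]
  simp only [addRightEmbedding_apply]
  constructor
  · intro h e he
    exact hT e ((hR x).1 x.2 he) (h e he)
  · intro h e he
    obtain ⟨w, hw, s, hs, rfl⟩ := h e he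
    obtain ⟨i, hi, s', hs', hws⟩ := hW w hw
    exact ⟨i, hi, s' + s, add_mem hs' hs, by rw [add_right_comm, hws, add_assoc]⟩

end MonomialIdeal

section L1Norm

variable {ι : Type*} [Fintype ι]

def l1Norm (a : ι →₀ ℤ) : ℕ := ∑ i, (a i).natAbs

@[simp]
theorem l1Norm_zero : l1Norm (0 : ι →₀ ℤ) = 0 := by
  simp [l1Norm]

theorem l1Norm_eq_zero {a : ι →₀ ℤ} : l1Norm a = 0 ↔ a = 0 := by
  simp [l1Norm, Finset.sum_eq_zero_iff, Finsupp.ext_iff]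

@[simp]
theorem l1Norm_neg (a : ι →₀ ℤ) : l1Norm (-a) = l1Norm a := by
  simp [l1Norm]

theorem l1Norm_add_le (a b : ι →₀ ℤ) : l1Norm (a + b) ≤ l1Norm a + l1Norm b := by
  simp only [l1Norm, Finsupp.add_apply, ← Finset.sum_add_distrib]
  exact Finset.sum_le_sum fun i _ => Int.natAbs_add_le _ _

theorem l1Norm_add_single (a : ι →₀ ℤ) (i : ι) (z : ℤ) :
    l1Norm (a + Finsupp.single i z) + (a i).natAbs = l1Norm a + (a i + z).natAbs := by
  classical
  have hrest : ∀ j ∈ Finset.univ.erase i, ((a + Finsupp.single i z) j).natAbs = (a j).natAbs :=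
    fun j hj => by simp [Finsupp.single_eq_of_ne (Finset.ne_of_mem_erase hj)]
  rw [l1Norm, l1Norm, ← Finset.add_sum_erase _ _ (Finset.mem_univ i),
    ← Finset.add_sum_erase _ _ (Finset.mem_univ i), Finset.sum_congr rfl hrest]
  simp only [Finsupp.add_apply, Finsupp.single_eq_same]
  ring

theorem l1Norm_single (i : ι) (z : ℤ) : l1Norm (Finsupp.single i z) = z.natAbs := by
  simpa using l1Norm_add_single 0 i z

theorem eq_zero_or_eq_single_of_l1Norm_le_one {δ : ι →₀ ℤ} (hδ : l1Norm δ ≤ 1) :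
    δ = 0 ∨ ∃ i, ∃ ε : ℤ, (ε = 1 ∨ ε = -1) ∧ δ = Finsupp.single i ε := by
  by_cases h0 : δ = 0
  · exact Or.inl h0
  obtain ⟨i, hi⟩ : ∃ i, δ i ≠ 0 := by simpa [Finsupp.ext_iff] using h0
  have hrest := l1Norm_add_single δ i (-δ i)
  have hzero : δ + Finsupp.single i (-δ i) = 0 :=
    l1Norm_eq_zero.1 (by rw [add_neg_cancel, Int.natAbs_zero] at hrest; omega)
  refine Or.inr ⟨i, δ i, by omega, ?_⟩
  rw [← sub_eq_zero, sub_eq_add_neg, ← Finsupp.single_neg, hzero]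

theorem exists_l1Norm_le_one_l1Norm_sub_le {a : ι →₀ ℤ} {m : ℕ} (ha : l1Norm a ≤ m + 1) :
    ∃ δ, l1Norm δ ≤ 1 ∧ l1Norm (a - δ) ≤ m := by
  by_cases h0 : a = 0
  · exact ⟨0, by simp, by simp [h0]⟩
  obtain ⟨i, hi⟩ : ∃ i, a i ≠ 0 := by simpa [Finsupp.ext_iff] using h0
  obtain ⟨ε, hε, hεa⟩ : ∃ ε : ℤ, ε.natAbs = 1 ∧ (a i + -ε).natAbs + 1 = (a i).natAbs :=
    ⟨if 0 < a i then 1 else -1, by split_ifs <;> rfl, by split_ifs <;> omega⟩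
  have := l1Norm_add_single a i (-ε)
  refine ⟨Finsupp.single i ε, by rw [l1Norm_single, hε], ?_⟩
  rw [sub_eq_add_neg, ← Finsupp.single_neg]
  omega

theorem l1Norm_add_lt_or_sub_lt {a δ δ' : ι →₀ ℤ} {m : ℕ} (hδ : l1Norm δ ≤ 1)
    (hδ' : l1Norm δ' ≤ 1) (hne : δ ≠ δ') (ha : l1Norm a ≤ m) (had : l1Norm (a + δ - δ') ≤ m) :
    l1Norm (a + δ) < m ∨ l1Norm (a - δ') < m := by
  rcases eq_zero_or_eq_single_of_l1Norm_le_one hδ with rfl | ⟨i, ε, hε, rfl⟩ <;>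
    rcases eq_zero_or_eq_single_of_l1Norm_le_one hδ' with rfl | ⟨i', ε', hε', rfl⟩
  · exact absurd rfl hne
  · have := l1Norm_add_single a i' (-ε')
    simp only [sub_eq_add_neg, ← Finsupp.single_neg, add_zero] at had ⊢
    omega
  · have := l1Norm_add_single a i ε
    simp only [sub_zero] at had ⊢
    omega
  · simp only [sub_eq_add_neg, ← Finsupp.single_neg] at had ⊢
    by_cases hi : i = i'
    · subst hi
      have hεε' : ε ≠ ε' := fun h => hne (by rw [h])
      rw [add_assoc, ← Finsupp.single_add] at had
      have h1 := l1Norm_add_single a i ε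
      have h2 := l1Norm_add_single a i (ε + -ε')
      omega
    · have h1 := l1Norm_add_single a i ε
      have h2 := l1Norm_add_single a i' (-ε')
      have h3 := l1Norm_add_single (a + Finsupp.single i ε) i' (-ε')
      rw [Finsupp.add_apply, Finsupp.single_eq_of_ne (Ne.symm hi), add_zero] at h3
      omega

end L1Norm

def crossPolytopeCone (n : ℕ) : AddSubmonoid (LaurentExp n) where
  carrier := {e | l1Norm e.2 ≤ e.1}
  zero_mem' := by simp
  add_mem' {e f} he hf := (l1Norm_add_le e.2 f.2).trans (add_le_add he hf)

theorem mem_crossPolytopeCone {n : ℕ} {e : LaurentExp n} :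
    e ∈ crossPolytopeCone n ↔ l1Norm e.2 ≤ e.1 :=
  Iff.rfl

section GeneratorExponents

variable {n : ℕ}

theorem expA_fst (v : Fin (2 * n + 1)) : (expA n v).1 = 1 := by
  unfold expA
  split_ifs <;> rfl

theorem l1Norm_expA_snd (v : Fin (2 * n + 1)) : l1Norm (expA n v).2 ≤ 1 := by
  unfold expA
  split_ifs <;> simp [l1Norm_single]

theorem expA_mem_crossPolytopeCone (v : Fin (2 * n + 1)) : expA n v ∈ crossPolytopeCone n := by
  rw [mem_crossPolytopeCone, expA_fst]
  exact l1Norm_expA_snd v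

theorem expA_injective : Function.Injective (expA n) := by
  intro v v' h
  have := v.isLt
  have := v'.isLt
  ext
  unfold expA at h
  split_ifs at h <;>
    simp [Fin.ext_iff, ← Finsupp.single_neg, Finsupp.single_eq_single_iff,
      eq_comm (a := (0 : Fin n →₀ ℤ))] at h <;> omega

theorem exists_expA_eq {δ : Fin n →₀ ℤ} (hδ : l1Norm δ ≤ 1) : ∃ v, expA n v = (1, δ) := by
  rcases eq_zero_or_eq_single_of_l1Norm_le_one hδ with rfl | ⟨i, ε, rfl | rfl, rfl⟩
  · exact ⟨⟨0, by omega⟩, by simp [expA]⟩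
  · refine ⟨⟨i + 1, by omega⟩, ?_⟩
    simp [expA]
  · refine ⟨⟨n + i + 1, by omega⟩, ?_⟩
    simp [expA]

theorem closure_range_expA :
    AddSubmonoid.closure (Set.range (expA n)) = crossPolytopeCone n := by
  refine le_antisymm ((AddSubmonoid.closure_le).2 ?_) ?_
  · rintro _ ⟨v, rfl⟩
    exact expA_mem_crossPolytopeCone v
  · rintro ⟨m, a⟩ h
    rw [mem_crossPolytopeCone] at h
    induction m generalizing a with
    | zero =>
      obtain rfl := l1Norm_eq_zero.1 (Nat.le_zero.1 h)
      exact zero_mem _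
    | succ m ih =>
      obtain ⟨δ, hδ, ha⟩ := exists_l1Norm_le_one_l1Norm_sub_le h
      obtain ⟨v, hv⟩ := exists_expA_eq hδ
      have hsplit : ((m + 1, a) : LaurentExp n) = expA n v + (m, a - δ) := by
        rw [hv, Prod.mk_add_mk, add_comm 1, add_sub_cancel]
      rw [hsplit]
      exact add_mem (AddSubmonoid.subset_closure ⟨v, rfl⟩) (ih _ ha)

theorem mem_ringA_iff {K : Type} [Field K] {x : LaurentRing K n} :
    x ∈ ringA K n ↔ ↑x.coeff.support ⊆ (crossPolytopeCone n : Set (LaurentExp n)) := by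
  rw [ringA, AddMonoidAlgebra.mem_adjoin_range_single_iff, closure_range_expA]

theorem exists_expA_of_add_expA_eq {v v' : Fin (2 * n + 1)} (hvv' : v ≠ v')
    {e s : LaurentExp n} (he : e ∈ crossPolytopeCone n) (hs : s ∈ crossPolytopeCone n)
    (h : e + expA n v = expA n v' + s) :
    ∃ w, (∃ s ∈ crossPolytopeCone n, expA n w + expA n v = expA n v' + s) ∧
      ∃ s ∈ crossPolytopeCone n, e = expA n w + s := by
  obtain ⟨m, a⟩ := e
  obtain ⟨p, b⟩ := s
  obtain ⟨δ, hv⟩ : ∃ δ, expA n v = (1, δ) := ⟨_, Prod.ext (expA_fst v) rfl⟩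
  obtain ⟨δ', hv'⟩ : ∃ δ', expA n v' = (1, δ') := ⟨_, Prod.ext (expA_fst v') rfl⟩
  have hδ : l1Norm δ ≤ 1 := by simpa [hv] using l1Norm_expA_snd v
  have hδ' : l1Norm δ' ≤ 1 := by simpa [hv'] using l1Norm_expA_snd v'
  have hδδ' : δ ≠ δ' := fun hδδ' => hvv' (expA_injective (by rw [hv, hv', hδδ']))
  rw [hv, hv', Prod.mk_add_mk, Prod.mk_add_mk, Prod.mk.injEq] at h
  have hb : b = a + δ - δ' := by rw [h.2]; abel
  rw [mem_crossPolytopeCone] at he hs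
  dsimp only at he hs
  rcases l1Norm_add_lt_or_sub_lt hδ hδ' hδδ' he (by rw [← hb]; omega) with hlt | hlt
  · obtain ⟨w, hw⟩ := exists_expA_eq (δ := -δ) (by simpa using hδ)
    refine ⟨w, ⟨(1, -δ'), by simpa [mem_crossPolytopeCone] using hδ', ?_⟩,
      (m - 1, a + δ), show l1Norm (a + δ) ≤ m - 1 by omega, ?_⟩
    · rw [hw, hv, hv', Prod.mk_add_mk, Prod.mk_add_mk, neg_add_cancel, add_neg_cancel]
    · rw [hw, Prod.mk_add_mk, Prod.mk.injEq]
      exact ⟨by omega, by abel⟩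
  · refine ⟨v', ⟨expA n v, expA_mem_crossPolytopeCone v, rfl⟩,
      (m - 1, a - δ'), show l1Norm (a - δ') ≤ m - 1 by omega, ?_⟩
    rw [hv', Prod.mk_add_mk, Prod.mk.injEq]
    exact ⟨by omega, by abel⟩

end GeneratorExponents

theorem An_stronglyKoszul_general (K : Type) [Field K] (n : ℕ) :
    StronglyKoszulWith (ringAGen K n) := by
  intro r c hc j
  refine ⟨ringAGen K n '' {w | ∃ i ∈ c '' {k | k < j}, ∃ s ∈ crossPolytopeCone n,
    expA n w + expA n (c j) = expA n i + s}, Set.image_subset_range _ _, ?_⟩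
  rw [← Set.image_image (ringAGen K n) c]
  refine colon_span_monomials_eq_span (fun _ => mem_ringA_iff) (fun _ => rfl) (fun _ hw => hw) ?_
  rintro e he ⟨_, ⟨k, hk, rfl⟩, s, hs, h⟩
  obtain ⟨w, hw, hew⟩ := exists_expA_of_add_expA_eq (hc.injective.ne (ne_of_gt hk)) he hs h
  exact ⟨w, ⟨c k, ⟨k, hk, rfl⟩, hw⟩, hew⟩

/-- **Example 1.4.**  The toric ring
`K[A_n] = K[s, t_1 s, …, t_n s, t_1⁻¹ s, …, t_n⁻¹ s]` is strongly Koszul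
(with respect to its distinguished degree-one system of generators). -/
theorem An_stronglyKoszul (K : Type) [Field K] (n : ℕ) (hn : 1 ≤ n) :
    StronglyKoszulWith (ringAGen K n) :=
  An_stronglyKoszul_general K n

end
end
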